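/- arXiv:2410.15982 — 2 statements merged into one kernel-verified Lean document; each statement's English description precedes it below -/
import Mathlib

section
/- Let Φ ∈ ℝ^{N×m} have orthonormal columns, let S ∈ ℝ^{N×r} be a selection matrix, suppose Θ := SᵀΦ has full row rank, and let Θ⁺ = Θᵀ(ΘΘᵀ)⁻¹. Let u ∈ ℝ^N, y = Sᵀu, and let Z ∈ ℝ^{m×(m−r)} satisfy ZᵀZ = I_{m−r} with column space R[Z] = N[Θ]. Then the optimal kernel vector ẑ := ZZᵀΦᵀu satisfies Θẑ = 0, and for every z ∈ ℝ^m with Θz = 0, the total error E_tot(z) = |ΦΘ⁺y + Φz − u| satisfies E_tot(ẑ) ≤ E_tot(z), with equality if and only if z = ẑ. -/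
open Matrix BigOperators

/-- Euclidean norm of a vector in `ℝ^n`. -/
noncomputable def eNorm {n : ℕ} (x : Fin n → ℝ) : ℝ := Real.sqrt (∑ i, x i ^ 2)

private lemma mulVec_dot' {p q : ℕ} (A : Matrix (Fin p) (Fin q) ℝ) (x : Fin q → ℝ)
    (v : Fin p → ℝ) : (A.mulVec x) ⬝ᵥ v = x ⬝ᵥ (Aᵀ.mulVec v) := by
  rw [dotProduct_comm, dotProduct_mulVec, ← mulVec_transpose, dotProduct_comm]

private lemma eNorm_eq_sqrt_dot {n : ℕ} (x : Fin n → ℝ) :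
    eNorm x = Real.sqrt (x ⬝ᵥ x) := by
  simp [eNorm, dotProduct, pow_two]

private lemma dot_self_nonneg {n : ℕ} (v : Fin n → ℝ) : 0 ≤ v ⬝ᵥ v :=
  Finset.sum_nonneg fun i _ => mul_self_nonneg _

/-- Let `Φ ∈ ℝ^{N×m}` have orthonormal columns, `S ∈ ℝ^{N×r}` a selection matrix,
`Θ := SᵀΦ` of full row rank with `Θ⁺ = Θᵀ(ΘΘᵀ)⁻¹`, `u ∈ ℝ^N`, `y = Sᵀu`, and let
`Z ∈ ℝ^{m×(m-r)}` have orthonormal columns spanning `N[Θ]`. Then the optimal kernel vector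
`ẑ = ZZᵀΦᵀu` lies in `N[Θ]` and minimizes the total error
`E_tot(z) = |ΦΘ⁺y + Φz - u|` over `z ∈ N[Θ]`, uniquely. -/
theorem optimal_kernel_vector {N m r : ℕ} (hr : 0 < r) (hrm : r < m) (hmN : m ≤ N)
    (Φ : Matrix (Fin N) (Fin m) ℝ) (hΦ : Φᵀ * Φ = 1)
    (S : Matrix (Fin N) (Fin r) ℝ)
    (hS : ∃ ι : Fin r → Fin N, Function.Injective ι ∧
      ∀ (k : Fin N) (j : Fin r), S k j = if k = ι j then (1 : ℝ) else 0)
    (hrank : (Sᵀ * Φ).rank = r)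
    (u : Fin N → ℝ)
    (Z : Matrix (Fin m) (Fin (m - r)) ℝ) (hZ : Zᵀ * Z = 1)
    (hZrange : {v : Fin m → ℝ | ∃ x : Fin (m - r) → ℝ, v = Z.mulVec x} =
      {v : Fin m → ℝ | (Sᵀ * Φ).mulVec v = 0}) :
    (Sᵀ * Φ).mulVec ((Z * Zᵀ * Φᵀ).mulVec u) = 0 ∧
    ∀ z : Fin m → ℝ, (Sᵀ * Φ).mulVec z = 0 →
      (eNorm (Φ.mulVec (((Sᵀ * Φ)ᵀ * ((Sᵀ * Φ) * (Sᵀ * Φ)ᵀ)⁻¹).mulVec (Sᵀ.mulVec u)) +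
          Φ.mulVec ((Z * Zᵀ * Φᵀ).mulVec u) - u) ≤
        eNorm (Φ.mulVec (((Sᵀ * Φ)ᵀ * ((Sᵀ * Φ) * (Sᵀ * Φ)ᵀ)⁻¹).mulVec (Sᵀ.mulVec u)) +
          Φ.mulVec z - u)) ∧
      (eNorm (Φ.mulVec (((Sᵀ * Φ)ᵀ * ((Sᵀ * Φ) * (Sᵀ * Φ)ᵀ)⁻¹).mulVec (Sᵀ.mulVec u)) +
          Φ.mulVec ((Z * Zᵀ * Φᵀ).mulVec u) - u) =
        eNorm (Φ.mulVec (((Sᵀ * Φ)ᵀ * ((Sᵀ * Φ) * (Sᵀ * Φ)ᵀ)⁻¹).mulVec (Sᵀ.mulVec u)) +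
          Φ.mulVec z - u) ↔ z = (Z * Zᵀ * Φᵀ).mulVec u) := by
  set Θ : Matrix (Fin r) (Fin m) ℝ := Sᵀ * Φ with hΘdef
  set a : Fin N → ℝ := Φ.mulVec ((Θᵀ * (Θ * Θᵀ)⁻¹).mulVec (Sᵀ.mulVec u)) with hadef
  set zh : Fin m → ℝ := (Z * Zᵀ * Φᵀ).mulVec u with hzhdef
  -- zh lies in the null space of Θ
  have hZh0 : Θ.mulVec zh = 0 := by
    have hmem : zh ∈ {v : Fin m → ℝ | ∃ x : Fin (m - r) → ℝ, v = Z.mulVec x} := by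
      refine ⟨(Zᵀ * Φᵀ).mulVec u, ?_⟩
      rw [hzhdef, Matrix.mul_assoc, ← mulVec_mulVec]
    rw [hZrange] at hmem
    exact hmem
  -- Z Zᵀ is the identity on the null space of Θ
  have hZZZ : (Z * Zᵀ) * Z = Z := by
    rw [Matrix.mul_assoc, hZ, Matrix.mul_one]
  have hproj : ∀ z : Fin m → ℝ, Θ.mulVec z = 0 → (Z * Zᵀ).mulVec z = z := by
    intro z hz
    have hmem : z ∈ {v : Fin m → ℝ | Θ.mulVec v = 0} := hz
    rw [← hZrange] at hmem
    obtain ⟨x, rfl⟩ := hmem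
    rw [mulVec_mulVec, hZZZ]
  -- key dot product facts for z in the null space
  have hPhiPhi : ∀ z : Fin m → ℝ, (Φ.mulVec z) ⬝ᵥ (Φ.mulVec z) = z ⬝ᵥ z := by
    intro z
    rw [mulVec_dot', mulVec_mulVec, hΦ, one_mulVec]
  have hPhia : ∀ z : Fin m → ℝ, Θ.mulVec z = 0 → (Φ.mulVec z) ⬝ᵥ a = 0 := by
    intro z hz
    rw [mulVec_dot', hadef, mulVec_mulVec, hΦ, one_mulVec, ← mulVec_mulVec,
      dotProduct_comm, mulVec_dot', transpose_transpose, hz, dotProduct_zero]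
  have hPhiu : ∀ z : Fin m → ℝ, Θ.mulVec z = 0 → (Φ.mulVec z) ⬝ᵥ u = z ⬝ᵥ zh := by
    intro z hz
    rw [mulVec_dot']
    have h1 : z ⬝ᵥ zh = ((Z * Zᵀ).mulVec z) ⬝ᵥ (Φᵀ.mulVec u) := by
      rw [hzhdef, ← mulVec_mulVec, mulVec_dot', transpose_mul, transpose_transpose,
        mulVec_mulVec]
    rw [h1, hproj z hz]
  -- the squared-error formula
  have hE2 : ∀ z : Fin m → ℝ, Θ.mulVec z = 0 →
      (a + Φ.mulVec z - u) ⬝ᵥ (a + Φ.mulVec z - u) =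
        z ⬝ᵥ z - 2 * (z ⬝ᵥ zh) + ((a - u) ⬝ᵥ (a - u)) := by
    intro z hz
    have h1 : a + Φ.mulVec z - u = Φ.mulVec z + (a - u) := by
      abel
    rw [h1]
    rw [dotProduct_add, add_dotProduct, add_dotProduct, hPhiPhi z]
    rw [dotProduct_sub, sub_dotProduct, hPhia z hz, hPhiu z hz]
    have h2 : a ⬝ᵥ (Φ.mulVec z) = 0 := by
      rw [dotProduct_comm]; exact hPhia z hz
    have h3 : u ⬝ᵥ (Φ.mulVec z) = z ⬝ᵥ zh := by
      rw [dotProduct_comm]; exact hPhiu z hz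
    rw [h2, h3]
    ring
  -- expansion of (z - zh)⬝(z - zh)
  have hdiff : ∀ z : Fin m → ℝ, Θ.mulVec z = 0 →
      (a + Φ.mulVec z - u) ⬝ᵥ (a + Φ.mulVec z - u) -
        (a + Φ.mulVec zh - u) ⬝ᵥ (a + Φ.mulVec zh - u) = (z - zh) ⬝ᵥ (z - zh) := by
    intro z hz
    rw [hE2 z hz, hE2 zh hZh0]
    simp only [sub_dotProduct, dotProduct_sub]
    have hc : zh ⬝ᵥ z = z ⬝ᵥ zh := dotProduct_comm _ _
    linarith
  refine ⟨hZh0, fun z hz => ?_⟩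
  have hd := hdiff z hz
  have hnn : 0 ≤ (z - zh) ⬝ᵥ (z - zh) := dot_self_nonneg _
  set A := (a + Φ.mulVec zh - u) ⬝ᵥ (a + Φ.mulVec zh - u) with hA
  set B := (a + Φ.mulVec z - u) ⬝ᵥ (a + Φ.mulVec z - u) with hB
  have hAB : A ≤ B := by linarith [hd ▸ hnn, hd]
  have hAnn : 0 ≤ A := dot_self_nonneg _
  have hBnn : 0 ≤ B := dot_self_nonneg _
  constructor
  · rw [eNorm_eq_sqrt_dot, eNorm_eq_sqrt_dot]
    exact Real.sqrt_le_sqrt hAB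
  · rw [eNorm_eq_sqrt_dot, eNorm_eq_sqrt_dot]
    rw [Real.sqrt_inj hAnn hBnn]
    constructor
    · intro hAB'
      have h0 : (z - zh) ⬝ᵥ (z - zh) = 0 := by linarith
      have := dotProduct_self_eq_zero.mp h0
      have := sub_eq_zero.mp this
      exact this
    · intro h
      subst h
      rfl
end

section
/- Let P ∈ ℝ^{N×N} be an idempotent matrix (P² = P) with P ≠ 0 and P ≠ I_N. Then ‖I_N − P‖₂ = ‖P‖₂, where ‖·‖₂ is the spectral norm. -/
/-!
Split `x = a + b` with `a = P x` and `b = (1 - P) x`. The test vector `y = ‖a‖² b - ⟪a, b⟫ a`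
(a multiple of the component of `b` orthogonal to `a`) satisfies `(1 - P) y = ‖a‖² b`, and
`‖a‖ ‖y‖ ≤ ‖a‖² ‖b‖ ‖a + b‖` because the difference of the squares is `‖a‖⁴ (⟪a, b⟫ + ‖b‖²)²`.
Hence `‖P x‖ ≤ ‖1 - P‖ ‖x‖` unless `y = 0`, in which case `a = 0` or `b = 0` and the bound
follows from `‖1 - P‖ ≥ 1`, valid for any nonzero idempotent. Exchanging `P` and `1 - P` gives
the equality, in any real inner product space.
-/

open Matrix BigOperators

/-- Spectral norm of a matrix: the maximum of `|Ax|` over unit vectors `x` (realized as a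
supremum, which is attained since the unit sphere is compact). -/
noncomputable def specNorm {n m : ℕ} (A : Matrix (Fin n) (Fin m) ℝ) : ℝ :=
  sSup ((fun x => eNorm (A.mulVec x)) '' {x : Fin m → ℝ | eNorm x = 1})

open scoped RealInnerProductSpace Matrix.Norms.L2Operator

theorem IsIdempotentElem.one_le_norm {R : Type*} [NonUnitalNormedRing R] {p : R}
    (hp : IsIdempotentElem p) (hp0 : p ≠ 0) : 1 ≤ ‖p‖ := by
  have hpos : 0 < ‖p‖ := norm_pos_iff.mpr hp0
  have : ‖p‖ ≤ ‖p‖ * ‖p‖ := calc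
    ‖p‖ = ‖p * p‖ := by rw [hp.eq]
    _ ≤ ‖p‖ * ‖p‖ := norm_mul_le p p
  nlinarith

section InnerProductSpace

variable {E : Type*} [NormedAddCommGroup E] [InnerProductSpace ℝ E]

theorem norm_mul_norm_sq_smul_sub_inner_smul_le (a b : E) :
    ‖a‖ * ‖‖a‖ ^ 2 • b - ⟪a, b⟫ • a‖ ≤ ‖a‖ ^ 2 * ‖b‖ * ‖a + b‖ := by
  have hy : ‖‖a‖ ^ 2 • b - ⟪a, b⟫ • a‖ ^ 2 = ‖a‖ ^ 2 * (‖a‖ ^ 2 * ‖b‖ ^ 2 - ⟪a, b⟫ ^ 2) := by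
    rw [norm_sub_sq_real, norm_smul, norm_smul, inner_smul_left, inner_smul_right,
      real_inner_comm b a]
    simp only [Real.norm_eq_abs, abs_pow, abs_norm, conj_trivial, mul_pow, sq_abs]
    ring
  refine (pow_le_pow_iff_left₀ (by positivity) (by positivity) two_ne_zero).mp ?_
  rw [mul_pow, mul_pow, mul_pow, hy, norm_add_sq_real]
  nlinarith [mul_nonneg (sq_nonneg (‖a‖ ^ 2)) (sq_nonneg (⟪a, b⟫ + ‖b‖ ^ 2))]

theorem norm_le_norm_one_sub_of_isIdempotentElem {p : E →L[ℝ] E} (hp : IsIdempotentElem p)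
    (hp1 : p ≠ 1) : ‖p‖ ≤ ‖1 - p‖ := by
  set q := 1 - p
  have hq1 : 1 ≤ ‖q‖ := hp.one_sub.one_le_norm (sub_ne_zero.mpr hp1.symm)
  refine p.opNorm_le_bound (by positivity) fun x => ?_
  set a := p x
  set b := q x
  have hx : a + b = x := by simp [a, b, q]
  have hqa : q a = 0 := sub_eq_zero.mpr (DFunLike.congr_fun hp.eq x).symm
  have hqb : q b = b := DFunLike.congr_fun hp.one_sub.eq x
  set y := ‖a‖ ^ 2 • b - ⟪a, b⟫ • a
  have hqy : q y = ‖a‖ ^ 2 • b := by simp [y, hqa, hqb]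
  rcases eq_or_ne y 0 with hy | hy
  · have : ‖a‖ ^ 2 • b = 0 := by rw [← hqy, hy, map_zero]
    rcases smul_eq_zero.mp this with ha | hb
    · rw [pow_eq_zero_iff two_ne_zero, norm_eq_zero] at ha
      rw [ha, norm_zero]
      positivity
    · rw [← hx, hb, add_zero]
      exact le_mul_of_one_le_left (norm_nonneg a) hq1
  · have key : ‖a‖ * ‖y‖ ≤ ‖q‖ * ‖x‖ * ‖y‖ := calc
      ‖a‖ * ‖y‖ ≤ ‖a‖ ^ 2 * ‖b‖ * ‖x‖ := hx ▸ norm_mul_norm_sq_smul_sub_inner_smul_le a b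
      _ = ‖q y‖ * ‖x‖ := by rw [hqy, norm_smul, Real.norm_eq_abs, abs_pow, abs_norm]
      _ ≤ ‖q‖ * ‖y‖ * ‖x‖ := by gcongr; exact q.le_opNorm y
      _ = ‖q‖ * ‖x‖ * ‖y‖ := by ring
    exact le_of_mul_le_mul_right key (norm_pos_iff.mpr hy)

theorem norm_one_sub_eq_norm_of_isIdempotentElem {p : E →L[ℝ] E} (hp : IsIdempotentElem p)
    (hp0 : p ≠ 0) (hp1 : p ≠ 1) : ‖1 - p‖ = ‖p‖ := by
  have hq := norm_le_norm_one_sub_of_isIdempotentElem hp.one_sub (by simpa using hp0)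
  rw [sub_sub_cancel] at hq
  exact le_antisymm hq (norm_le_norm_one_sub_of_isIdempotentElem hp hp1)

end InnerProductSpace

theorem eNorm_eq_norm_toLp {n : ℕ} (x : Fin n → ℝ) :
    eNorm x = ‖(WithLp.toLp 2 x : EuclideanSpace ℝ (Fin n))‖ := by
  simp [eNorm, EuclideanSpace.norm_eq]

theorem specNorm_eq_l2_opNorm {n m : ℕ} (A : Matrix (Fin n) (Fin m) ℝ) : specNorm A = ‖A‖ := by
  have hsphere : Metric.sphere (0 : EuclideanSpace ℝ (Fin m)) 1 =
      WithLp.toLp 2 '' {x | eNorm x = 1} := by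
    ext v
    exact ⟨fun hv => ⟨v.ofLp, by simpa [eNorm_eq_norm_toLp] using hv, rfl⟩,
      by rintro ⟨x, hx, rfl⟩; simpa [eNorm_eq_norm_toLp] using hx⟩
  rw [l2_opNorm_def, ← ContinuousLinearMap.sSup_sphere_eq_norm, hsphere, Set.image_image]
  simp [specNorm, eNorm_eq_norm_toLp]

theorem spectral_norm_complementary_projector_general {N : ℕ}
    (P : Matrix (Fin N) (Fin N) ℝ) (hP : P * P = P) (h0 : P ≠ 0) (h1 : P ≠ 1) :
    specNorm (1 - P) = specNorm P := by
  let T := toEuclideanCLM (n := Fin N) (𝕜 := ℝ)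
  rw [specNorm_eq_l2_opNorm, specNorm_eq_l2_opNorm, ← l2_opNorm_toEuclideanCLM,
    ← l2_opNorm_toEuclideanCLM, map_sub, map_one]
  have hT : Function.Injective T := EquivLike.injective T
  refine norm_one_sub_eq_norm_of_isIdempotentElem ((show IsIdempotentElem P from hP).map T) ?_ ?_
  · exact (map_ne_zero_iff T hT).mpr h0
  · exact map_one T ▸ hT.ne h1

/-- If `P ∈ ℝ^{N×N}` is idempotent with `P ≠ 0` and `P ≠ I`, then `‖I - P‖₂ = ‖P‖₂`. -/
theorem spectral_norm_complementary_projector {N : ℕ} (hN : 0 < N)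
    (P : Matrix (Fin N) (Fin N) ℝ) (hP : P * P = P) (h0 : P ≠ 0) (h1 : P ≠ 1) :
    specNorm (1 - P) = specNorm P :=
  spectral_norm_complementary_projector_general P hP h0 h1
end
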